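/- arXiv:math/0211270 — 2 statements merged into one kernel-verified Lean document; each statement's English description precedes it below -/
import Mathlib

section
/- Every closed abelian subgroup of GL_n(Z_p) has only finitely many elements of finite order, i.e. its set of torsion elements generates a finite subgroup; in particular, a compact abelian subgroup of GL_n(Q_p) has finite torsion subgroup. -/
open scoped NNReal

namespace TorsionGLAux

variable {p : ℕ} [Fact p.Prime] {n : ℕ}

/-- sup of entrywise p-adic norms of a matrix -/
noncomputable def e (A : Matrix (Fin n) (Fin n) ℚ_[p]) : ℝ≥0 :=
  Finset.univ.sup fun ij : Fin n × Fin n => ‖A ij.1 ij.2‖₊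

lemma entry_le_e (A : Matrix (Fin n) (Fin n) ℚ_[p]) (i j : Fin n) : ‖A i j‖₊ ≤ e A :=
  Finset.le_sup (f := fun ij : Fin n × Fin n => ‖A ij.1 ij.2‖₊) (Finset.mem_univ (i, j))

lemma e_le {A : Matrix (Fin n) (Fin n) ℚ_[p]} {C : ℝ≥0}
    (h : ∀ i j, ‖A i j‖₊ ≤ C) : e A ≤ C :=
  Finset.sup_le fun ij _ => h ij.1 ij.2

lemma e_zero : e (0 : Matrix (Fin n) (Fin n) ℚ_[p]) = 0 :=
  le_antisymm (e_le fun _ _ => by simp) zero_le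

lemma e_one_le : e (1 : Matrix (Fin n) (Fin n) ℚ_[p]) ≤ 1 :=
  e_le fun i j => by
    rcases eq_or_ne i j with h | h
    · subst h; simp [Matrix.one_apply_eq]
    · simp [Matrix.one_apply_ne h]

lemma e_neg (A : Matrix (Fin n) (Fin n) ℚ_[p]) : e (-A) = e A := by
  simp only [e]
  congr 1
  ext ij
  have : (-A) ij.1 ij.2 = -(A ij.1 ij.2) := rfl
  rw [this, nnnorm_neg]

lemma e_add_le (A B : Matrix (Fin n) (Fin n) ℚ_[p]) : e (A + B) ≤ max (e A) (e B) :=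
  e_le fun i j => by
    refine (IsUltrametricDist.nnnorm_add_le_max (A i j) (B i j)).trans ?_
    exact max_le_max (entry_le_e A i j) (entry_le_e B i j)

lemma e_sub_le (A B : Matrix (Fin n) (Fin n) ℚ_[p]) : e (A - B) ≤ max (e A) (e B) := by
  rw [sub_eq_add_neg]
  exact (e_add_le A (-B)).trans (by rw [e_neg])

lemma e_mul_le (A B : Matrix (Fin n) (Fin n) ℚ_[p]) : e (A * B) ≤ e A * e B :=
  e_le fun i j => by
    rw [Matrix.mul_apply]
    refine IsUltrametricDist.nnnorm_sum_le_of_forall_le fun k _ => ?_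
    rw [nnnorm_mul]
    exact mul_le_mul' (entry_le_e A i k) (entry_le_e B k j)

lemma e_sum_le {ι : Type*} {s : Finset ι} {f : ι → Matrix (Fin n) (Fin n) ℚ_[p]} {C : ℝ≥0}
    (h : ∀ i ∈ s, e (f i) ≤ C) : e (∑ i ∈ s, f i) ≤ C :=
  e_le fun a b => by
    rw [Matrix.sum_apply]
    exact IsUltrametricDist.nnnorm_sum_le_of_forall_le fun i hi =>
      (entry_le_e (f i) a b).trans (h i hi)

lemma e_pow_le_one {A : Matrix (Fin n) (Fin n) ℚ_[p]} (hA : e A ≤ 1) (k : ℕ) :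
    e (A ^ k) ≤ 1 := by
  induction k with
  | zero => simpa using e_one_le
  | succ m ih =>
      rw [pow_succ]
      exact (e_mul_le _ _).trans (by simpa using mul_le_mul' ih hA)

lemma e_pow_le_sq {N : Matrix (Fin n) (Fin n) ℚ_[p]} (hN : e N ≤ 1) {k : ℕ} (hk : 2 ≤ k) :
    e (N ^ k) ≤ e N * e N := by
  obtain ⟨m, rfl⟩ : ∃ m, k = m + 2 := ⟨k - 2, by omega⟩
  rw [pow_add]
  refine (e_mul_le _ _).trans ?_
  have h2 : e (N ^ 2) ≤ e N * e N := by rw [pow_two]; exact e_mul_le N N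
  calc e (N ^ m) * e (N ^ 2) ≤ 1 * (e N * e N) := mul_le_mul' (e_pow_le_one hN m) h2
    _ = e N * e N := one_mul _

lemma natCast_nnnorm_le_one (c : ℕ) : ‖(c : ℚ_[p])‖₊ ≤ 1 := by
  have h : ‖((c : ℤ) : ℚ_[p])‖ ≤ 1 := Padic.norm_int_le_one (c : ℤ)
  rw [Int.cast_natCast] at h
  exact_mod_cast h

lemma mul_natCast_eq_smul (A : Matrix (Fin n) (Fin n) ℚ_[p]) (c : ℕ) :
    A * (c : Matrix (Fin n) (Fin n) ℚ_[p]) = c • A := by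
  calc A * (c : Matrix (Fin n) (Fin n) ℚ_[p]) = A * (c • 1) := by rw [nsmul_eq_mul, mul_one]
    _ = c • (A * 1) := mul_smul_comm c A 1
    _ = c • A := by rw [mul_one]

lemma e_nsmul_le (A : Matrix (Fin n) (Fin n) ℚ_[p]) (c : ℕ) : e (c • A) ≤ e A :=
  e_le fun i j => by
    have h : (c • A) i j = (c : ℚ_[p]) * A i j := by
      simp [Matrix.smul_apply, nsmul_eq_mul]
    rw [h, nnnorm_mul]
    calc ‖(c : ℚ_[p])‖₊ * ‖A i j‖₊ ≤ 1 * e A :=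
          mul_le_mul' (natCast_nnnorm_le_one c) (entry_le_e A i j)
      _ = e A := one_mul _

/-- key prime-order step -/
lemma eq_zero_of_prime_pow {N : Matrix (Fin n) (Fin n) ℚ_[p]} {q : ℕ} (hq : q.Prime)
    (hN1 : e N < (p : ℝ≥0)⁻¹) (hpow : (1 + N) ^ q = 1) : N = 0 := by
  by_contra hN0
  have hp1 : (1 : ℝ≥0) ≤ (p : ℝ≥0) := by
    exact_mod_cast Nat.one_le_iff_ne_zero.mpr (Fact.out : p.Prime).pos.ne'
  have hpinv_le : ((p : ℝ≥0))⁻¹ ≤ 1 := by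
    rw [inv_le_one_iff₀]; right; exact hp1
  have hNle1 : e N ≤ 1 := hN1.le.trans hpinv_le
  have hq2 : 2 ≤ q := hq.two_le
  obtain ⟨q', rfl⟩ : ∃ q', q = q' + 2 := ⟨q - 2, by omega⟩
  set q : ℕ := q' + 2 with hqdef
  -- binomial expansion
  have hb : (1 + N) ^ q = ∑ m ∈ Finset.range (q + 1),
      N ^ m * (q.choose m : Matrix (Fin n) (Fin n) ℚ_[p]) := by
    rw [add_comm]
    rw [(Commute.one_right N).add_pow q]
    refine Finset.sum_congr rfl fun m _ => by rw [one_pow, mul_one]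
  set f : ℕ → Matrix (Fin n) (Fin n) ℚ_[p] :=
    fun m => N ^ m * (q.choose m : Matrix (Fin n) (Fin n) ℚ_[p]) with hf
  have hsplit : ∑ m ∈ Finset.range (q + 1), f m
      = ((∑ i ∈ Finset.range (q' + 1), f (i + 2)) + f 1) + f 0 := by
    rw [show q + 1 = (q' + 2) + 1 from rfl, Finset.sum_range_succ' f (q' + 2),
      Finset.sum_range_succ' (fun i => f (i + 1)) (q' + 1)]
  have hf0 : f 0 = 1 := by simp [hf]
  have hf1 : f 1 = q • N := by
    rw [hf]
    simp only [pow_one, Nat.choose_one_right]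
    exact mul_natCast_eq_smul N q
  have h2 : (∑ i ∈ Finset.range (q' + 1), f (i + 2)) + q • N = 0 := by
    have h3 := hpow
    rw [hb, hsplit, hf0, hf1] at h3
    have h4 := congrArg (fun x => x - 1) h3
    simpa [add_sub_cancel_right] using h4
  have hkey : q • N = -(∑ i ∈ Finset.range (q' + 1), f (i + 2)) :=
    eq_neg_of_add_eq_zero_right h2
  -- upper bound
  have hub : e (q • N) ≤ e N * e N := by
    rw [hkey, e_neg]
    refine e_sum_le fun i _ => ?_
    rw [hf]
    calc e (N ^ (i + 2) * ((q.choose (i + 2) : ℕ) : Matrix (Fin n) (Fin n) ℚ_[p]))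
        = e ((q.choose (i + 2)) • N ^ (i + 2)) := by rw [mul_natCast_eq_smul]
      _ ≤ e (N ^ (i + 2)) := e_nsmul_le _ _
      _ ≤ e N * e N := e_pow_le_sq hNle1 (by omega)
  -- lower bound via a maximal entry
  have hex : ∃ i j, N i j ≠ 0 := by
    by_contra h; push_neg at h
    exact hN0 (by ext i j; simpa using h i j)
  obtain ⟨i0, j0, hij0⟩ := hex
  have hepos : 0 < e N :=
    lt_of_lt_of_le (by simpa [nnnorm_pos] using hij0) (entry_le_e N i0 j0)
  obtain ⟨ij, -, hsup⟩ := Finset.exists_mem_eq_sup (Finset.univ : Finset (Fin n × Fin n))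
    ⟨(i0, j0), Finset.mem_univ _⟩ (fun ij => ‖N ij.1 ij.2‖₊)
  have hsup' : e N = ‖N ij.1 ij.2‖₊ := hsup
  have hentry : ‖(q : ℚ_[p])‖₊ * e N ≤ e N * e N := by
    calc ‖(q : ℚ_[p])‖₊ * e N = ‖(q : ℚ_[p]) * N ij.1 ij.2‖₊ := by rw [nnnorm_mul, hsup']
      _ = ‖(q • N) ij.1 ij.2‖₊ := by
          congr 1
      _ ≤ e (q • N) := entry_le_e _ _ _
      _ ≤ e N * e N := hub
  have hqle : ‖(q : ℚ_[p])‖₊ ≤ e N := le_of_mul_le_mul_right hentry hepos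
  have hqlt : ‖(q : ℚ_[p])‖₊ < (p : ℝ≥0)⁻¹ := lt_of_le_of_lt hqle hN1
  -- contradiction with norms of primes
  have hqltR : ‖((q : ℤ) : ℚ_[p])‖ < (p : ℝ)⁻¹ := by
    rw [← NNReal.coe_lt_coe] at hqlt
    simpa [coe_nnnorm, NNReal.coe_inv] using hqlt
  have hppos : (0 : ℝ) < p := by exact_mod_cast (Fact.out : p.Prime).pos
  have h1R : ‖((q : ℤ) : ℚ_[p])‖ < 1 := by
    refine lt_of_lt_of_le hqltR ?_
    rw [inv_le_one_iff₀]; right; exact_mod_cast hp1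
  have hdvd : (p : ℤ) ∣ (q : ℤ) := Padic.norm_intCast_lt_one_iff.mp h1R
  have hpq : p = q := (Nat.prime_dvd_prime_iff_eq (Fact.out : p.Prime) hq).mp
    (Int.ofNat_dvd.mp hdvd)
  rw [← hpq] at hqltR
  rw [show ((p : ℤ) : ℚ_[p]) = (p : ℚ_[p]) by push_cast; ring, Padic.norm_p] at hqltR
  exact lt_irrefl _ hqltR

/-- power minus one bound -/
lemma e_pow_sub_one_le {g : (Matrix (Fin n) (Fin n) ℚ_[p])ˣ}
    (h1 : e ((g : Matrix (Fin n) (Fin n) ℚ_[p]) - 1) ≤ 1) (k : ℕ) :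
    e ((g : Matrix (Fin n) (Fin n) ℚ_[p]) ^ k - 1)
      ≤ e ((g : Matrix (Fin n) (Fin n) ℚ_[p]) - 1) := by
  set M := (g : Matrix (Fin n) (Fin n) ℚ_[p]) with hM
  induction k with
  | zero => simp [e_zero]
  | succ m ih =>
      have hid : M ^ (m + 1) - 1 = (M ^ m - 1) * (M - 1) + ((M ^ m - 1) + (M - 1)) := by
        noncomm_ring
      rw [hid]
      refine (e_add_le _ _).trans (max_le ?_ ?_)
      · refine (e_mul_le _ _).trans ?_
        calc e (M ^ m - 1) * e (M - 1) ≤ e (M - 1) * 1 := mul_le_mul' (ih.trans le_rfl) h1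
          _ = e (M - 1) := mul_one _
      · exact (e_add_le _ _).trans (max_le ih le_rfl)

/-- torsion elements near 1 are 1 -/
lemma eq_one_of_torsion {g : (Matrix (Fin n) (Fin n) ℚ_[p])ˣ} (hg : IsOfFinOrder g)
    (hsmall : e ((g : Matrix (Fin n) (Fin n) ℚ_[p]) - 1) < (p : ℝ≥0)⁻¹) : g = 1 := by
  by_contra hne
  have hp1 : (1 : ℝ≥0) ≤ (p : ℝ≥0) := by
    exact_mod_cast Nat.one_le_iff_ne_zero.mpr (Fact.out : p.Prime).pos.ne'
  have hpinv_le : ((p : ℝ≥0))⁻¹ ≤ 1 := by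
    rw [inv_le_one_iff₀]; right; exact hp1
  have hMle1 : e ((g : Matrix (Fin n) (Fin n) ℚ_[p]) - 1) ≤ 1 := hsmall.le.trans hpinv_le
  set m := orderOf g with hm
  have hm0 : 0 < m := hg.orderOf_pos
  have hm1 : m ≠ 1 := fun h => hne (orderOf_eq_one_iff.mp h)
  have hq : m.minFac.Prime := Nat.minFac_prime hm1
  have hdvd : m.minFac ∣ m := Nat.minFac_dvd m
  set h := g ^ (m / m.minFac) with hh
  have hhq : h ^ m.minFac = 1 := by
    rw [hh, ← pow_mul, Nat.div_mul_cancel hdvd]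
    exact pow_orderOf_eq_one g
  set N := (h : Matrix (Fin n) (Fin n) ℚ_[p]) - 1 with hN
  have hNsmall : e N < (p : ℝ≥0)⁻¹ := by
    have : e N ≤ e ((g : Matrix (Fin n) (Fin n) ℚ_[p]) - 1) := by
      rw [hN, hh, Units.val_pow_eq_pow_val]
      exact e_pow_sub_one_le hMle1 _
    exact lt_of_le_of_lt this hsmall
  have hpow : (1 + N) ^ m.minFac = 1 := by
    rw [hN, add_sub_cancel, ← Units.val_pow_eq_pow_val, hhq, Units.val_one]
  have hN0 : N = 0 := eq_zero_of_prime_pow hq hNsmall hpow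
  have hh1 : h = 1 := by
    apply Units.ext
    have : (h : Matrix (Fin n) (Fin n) ℚ_[p]) - 1 = 0 := hN0
    rw [Units.val_one]
    exact sub_eq_zero.mp this
  have hdvd2 : m ∣ m / m.minFac := orderOf_dvd_of_pow_eq_one (by rw [← hh]; exact hh1)
  have hlt : m / m.minFac < m := Nat.div_lt_self hm0 hq.one_lt
  have hpos : 0 < m / m.minFac := Nat.div_pos (Nat.minFac_le hm0) hq.pos
  exact absurd (Nat.le_of_dvd hpos hdvd2) (not_le.mpr hlt)

end TorsionGLAux
open scoped NNReal
open TorsionGLAux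

/-- A compact abelian subgroup of `GL_n(ℚ_p)` has finite torsion subgroup. -/
theorem torsion_finite_of_compact_abelian_subgroup_GL
    (p : ℕ) [Fact p.Prime] (n : ℕ)
    (G : Subgroup (Matrix.GeneralLinearGroup (Fin n) ℚ_[p]))
    (hcpt : IsCompact (G : Set (Matrix.GeneralLinearGroup (Fin n) ℚ_[p])))
    (hab : ∀ a ∈ G, ∀ b ∈ G, a * b = b * a) :
    {g : Matrix.GeneralLinearGroup (Fin n) ℚ_[p] | g ∈ G ∧ IsOfFinOrder g}.Finite := by
  classical
  rcases Nat.eq_zero_or_pos n with hn | hn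
  · subst hn
    haveI : Subsingleton (Matrix (Fin 0) (Fin 0) ℚ_[p]) :=
      ⟨fun a b => by ext i j; exact i.elim0⟩
    haveI : Subsingleton (Matrix.GeneralLinearGroup (Fin 0) ℚ_[p]) :=
      ⟨fun a b => Units.ext (Subsingleton.elim _ _)⟩
    exact Set.toFinite _
  set GLt := Matrix.GeneralLinearGroup (Fin n) ℚ_[p] with hGLt
  have hp1 : (1 : ℝ≥0) ≤ (p : ℝ≥0) := by
    exact_mod_cast Nat.one_le_iff_ne_zero.mpr (Fact.out : p.Prime).pos.ne'
  have hpinvpos : (0 : ℝ≥0) < (p : ℝ≥0)⁻¹ := by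
    refine inv_pos.mpr (lt_of_lt_of_le zero_lt_one hp1)
  -- uniform bound on entries of inverses
  have hbdd : ∀ ij : Fin n × Fin n, ∃ c : ℝ≥0,
      ∀ g ∈ G, ‖((g⁻¹ : GLt) : Matrix (Fin n) (Fin n) ℚ_[p]) ij.1 ij.2‖₊ ≤ c := by
    intro ij
    have hcont : Continuous fun g : GLt =>
        ‖((g⁻¹ : GLt) : Matrix (Fin n) (Fin n) ℚ_[p]) ij.1 ij.2‖₊ := by
      have hv : Continuous fun g : GLt => ((g⁻¹ : GLt) : Matrix (Fin n) (Fin n) ℚ_[p]) :=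
        Units.continuous_val.comp continuous_inv
      exact (hv.matrix_elem ij.1 ij.2).nnnorm
    obtain ⟨g0, hg0, hmax⟩ := hcpt.exists_isMaxOn ⟨1, G.one_mem⟩ hcont.continuousOn
    exact ⟨_, fun g hg => hmax hg⟩
  choose c hc using hbdd
  set C : ℝ≥0 := Finset.univ.sup c with hC
  have hCb : ∀ g ∈ G, e ((g⁻¹ : GLt) : Matrix (Fin n) (Fin n) ℚ_[p]) ≤ C := fun g hg =>
    e_le fun i j => (hc (i, j) g hg).trans (Finset.le_sup (Finset.mem_univ _))
  have hC1 : (1 : ℝ≥0) ≤ C := by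
    have h1 := hCb 1 G.one_mem
    have he1 : (1 : ℝ≥0) ≤ e (((1 : GLt)⁻¹ : GLt) : Matrix (Fin n) (Fin n) ℚ_[p]) := by
      rw [inv_one, Units.val_one]
      have := entry_le_e (1 : Matrix (Fin n) (Fin n) ℚ_[p]) ⟨0, hn⟩ ⟨0, hn⟩
      simpa [Matrix.one_apply_eq] using this
    exact he1.trans h1
  have hC0 : (0 : ℝ≥0) < C := lt_of_lt_of_le zero_lt_one hC1
  set r : ℝ≥0 := (p : ℝ≥0)⁻¹ / C with hr
  have hr0 : (0 : ℝ≥0) < r := div_pos hpinvpos hC0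
  -- separation of torsion elements
  have hsep : ∀ g ∈ G, IsOfFinOrder g → ∀ h' ∈ G, IsOfFinOrder h' →
      e ((h' : Matrix (Fin n) (Fin n) ℚ_[p]) - (g : Matrix (Fin n) (Fin n) ℚ_[p])) < r →
      g = h' := by
    intro g hg hgt h' hh' hht hlt
    have hkG : g⁻¹ * h' ∈ G := G.mul_mem (G.inv_mem hg) hh'
    have hcomm : Commute g⁻¹ h' := hab _ (G.inv_mem hg) _ hh'
    have hkt : IsOfFinOrder (g⁻¹ * h') := hcomm.isOfFinOrder_mul hgt.inv hht
    have hfact : ((g⁻¹ * h' : GLt) : Matrix (Fin n) (Fin n) ℚ_[p]) - 1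
        = ((g⁻¹ : GLt) : Matrix (Fin n) (Fin n) ℚ_[p]) *
          ((h' : Matrix (Fin n) (Fin n) ℚ_[p]) - (g : Matrix (Fin n) (Fin n) ℚ_[p])) := by
      have hinv : ((g⁻¹ : GLt) : Matrix (Fin n) (Fin n) ℚ_[p]) * (g : Matrix (Fin n) (Fin n) ℚ_[p]) = 1 := by
        rw [← Units.val_mul, inv_mul_cancel, Units.val_one]
      rw [mul_sub, Units.val_mul, hinv]
    have hkey : e (((g⁻¹ * h' : GLt) : Matrix (Fin n) (Fin n) ℚ_[p]) - 1) < (p : ℝ≥0)⁻¹ := by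
      rw [hfact]
      calc e (((g⁻¹ : GLt) : Matrix (Fin n) (Fin n) ℚ_[p]) *
            ((h' : Matrix (Fin n) (Fin n) ℚ_[p]) - (g : Matrix (Fin n) (Fin n) ℚ_[p])))
          ≤ e ((g⁻¹ : GLt) : Matrix (Fin n) (Fin n) ℚ_[p]) *
            e ((h' : Matrix (Fin n) (Fin n) ℚ_[p]) - (g : Matrix (Fin n) (Fin n) ℚ_[p])) :=
            e_mul_le _ _
        _ ≤ C * e ((h' : Matrix (Fin n) (Fin n) ℚ_[p]) - (g : Matrix (Fin n) (Fin n) ℚ_[p])) :=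
            mul_le_mul_left (hCb g hg) _
        _ < C * r := by
            exact mul_lt_mul_of_pos_left hlt hC0
        _ = (p : ℝ≥0)⁻¹ := by rw [hr, mul_div_cancel₀ _ hC0.ne']
    have hone : g⁻¹ * h' = 1 := eq_one_of_torsion hkt hkey
    exact (inv_mul_eq_one.mp hone)
  -- open cover by small balls
  set V : GLt → Set GLt := fun x =>
    {y | e ((y : Matrix (Fin n) (Fin n) ℚ_[p]) - (x : Matrix (Fin n) (Fin n) ℚ_[p])) < r}
    with hV
  have hVopen : ∀ x, IsOpen (V x) := by
    intro x
    have hdescr : V x = ⋂ ij : Fin n × Fin n,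
        {y : GLt | ‖((y : Matrix (Fin n) (Fin n) ℚ_[p])
          - (x : Matrix (Fin n) (Fin n) ℚ_[p])) ij.1 ij.2‖₊ < r} := by
      ext y
      simp only [hV, Set.mem_setOf_eq, Set.mem_iInter, e,
        Finset.sup_lt_iff (show ⊥ < r from hr0)]
      constructor
      · intro h ij; exact h ij (Finset.mem_univ _)
      · intro h ij _; exact h ij
    rw [hdescr]
    refine isOpen_iInter_of_finite fun ij => ?_
    have hcont : Continuous fun y : GLt =>
        ‖((y : Matrix (Fin n) (Fin n) ℚ_[p]) - (x : Matrix (Fin n) (Fin n) ℚ_[p])) ij.1 ij.2‖₊ :=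
      ((Units.continuous_val.sub continuous_const).matrix_elem ij.1 ij.2).nnnorm
    exact isOpen_lt hcont continuous_const
  have hcov : (G : Set GLt) ⊆ ⋃ x : GLt, V x := fun g _ =>
    Set.mem_iUnion.2 ⟨g, by simp [hV, e_zero, hr0]⟩
  obtain ⟨t, ht⟩ := hcpt.elim_finite_subcover V hVopen hcov
  -- conclude
  set S := {g : GLt | g ∈ G ∧ IsOfFinOrder g} with hS
  have hfin : (⋃ x ∈ t, S ∩ V x).Finite := by
    refine Set.Finite.biUnion t.finite_toSet fun x _ => ?_
    refine Set.Subsingleton.finite ?_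
    intro g hg h' hh'
    have h1 : e ((h' : Matrix (Fin n) (Fin n) ℚ_[p]) - (g : Matrix (Fin n) (Fin n) ℚ_[p])) < r := by
      have hdiff : (h' : Matrix (Fin n) (Fin n) ℚ_[p]) - (g : Matrix (Fin n) (Fin n) ℚ_[p])
          = ((h' : Matrix (Fin n) (Fin n) ℚ_[p]) - (x : Matrix (Fin n) (Fin n) ℚ_[p]))
            - ((g : Matrix (Fin n) (Fin n) ℚ_[p]) - (x : Matrix (Fin n) (Fin n) ℚ_[p])) := by
        noncomm_ring
      rw [hdiff]
      refine lt_of_le_of_lt (e_sub_le _ _) (max_lt hh'.2 hg.2)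
    exact hsep g hg.1.1 hg.1.2 h' hh'.1.1 hh'.1.2 h1
  refine hfin.subset ?_
  intro g hg
  have hgG : g ∈ (G : Set GLt) := hg.1
  obtain ⟨x, hxt, hgx⟩ := Set.mem_iUnion₂.mp (ht hgG)
  exact Set.mem_iUnion₂.mpr ⟨x, hxt, hg, hgx⟩
end

section
/- The kernel of the reduction map GL_n(Z_p) → GL_n(Z/p^k Z) is torsion-free for p odd and k ≥ 1 (and for p = 2, k ≥ 2). -/
/-!
A nontrivial torsion element of the kernel has a power of some prime order `q`, again in the
kernel. Write that power as `1 + A`, and let `r = ‖A‖ ≤ p⁻ᵏ` be the largest `p`-adic absolute value of an entry of `A`; this sup norm is submultiplicative because the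
`p`-adic norm is ultrametric. Expanding `(1 + A)^q = 1` gives `q • A = -∑_{2 ≤ m ≤ q} C(q,m) • A^m`.
For `m < q` the coefficient is divisible by `q` and `r^m < r`; the last term has norm at most
`r^q`, and `r^(q-1) ≤ p^(-k(q-1)) < ‖q‖`, which for `q = p` is where `k(p-1) ≥ 2` enters. So the
right side is strictly smaller than `‖q‖ r`, the norm of the left side, forcing `A = 0`.
-/

open Finset
open scoped Matrix.Norms.Elementwise

namespace Matrix

instance isUltrametricDist {α : Type*} [SeminormedAddCommGroup α] [IsUltrametricDist α]
    {m n : Type*} [Fintype m] [Fintype n] : IsUltrametricDist (Matrix m n α) :=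
  inferInstanceAs (IsUltrametricDist (m → n → α))

variable {R : Type*} [SeminormedRing R] [IsUltrametricDist R]

theorem norm_mul_le_of_isUltrametricDist {l m n : Type*} [Fintype l] [Fintype m] [Fintype n]
    (A : Matrix l m R) (B : Matrix m n R) : ‖A * B‖ ≤ ‖A‖ * ‖B‖ := by
  refine (norm_le_iff (by positivity)).2 fun i j => ?_
  rw [mul_apply]
  refine IsUltrametricDist.norm_sum_le_of_forall_le_of_nonneg (by positivity) fun c _ => ?_
  exact (norm_mul_le _ _).trans (mul_le_mul (norm_entry_le_entrywise_sup_norm A)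
    (norm_entry_le_entrywise_sup_norm B) (norm_nonneg _) (norm_nonneg _))

theorem norm_pow_le_of_isUltrametricDist {n : Type*} [Fintype n] [DecidableEq n]
    (A : Matrix n n R) {k : ℕ} (hk : k ≠ 0) : ‖A ^ k‖ ≤ ‖A‖ ^ k := by
  induction k with
  | zero => exact absurd rfl hk
  | succ k ih =>
    rcases eq_or_ne k 0 with rfl | hk0
    · simp
    rw [pow_succ, pow_succ]
    exact (norm_mul_le_of_isUltrametricDist _ _).trans
      (mul_le_mul_of_nonneg_right (ih hk0) (norm_nonneg _))

end Matrix

theorem one_add_pow_eq_one_add_nsmul_add_sum {R : Type*} [Semiring R] (x : R) (q : ℕ) :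
    (1 + x) ^ q = 1 + q • x + ∑ m ∈ Ico 2 (q + 1), q.choose m • x ^ m := by
  rcases q with _ | q
  · simp
  rw [add_comm 1 x, (Commute.one_right x).add_pow, range_eq_Ico,
    sum_eq_sum_Ico_succ_bot (by omega), sum_eq_sum_Ico_succ_bot (by omega), ← add_assoc]
  simp only [one_pow, mul_one, ← nsmul_eq_mul', pow_zero, pow_one, Nat.choose_zero_right,
    Nat.choose_one_right, one_smul, zero_add]

theorem Subgroup.eq_one_of_isOfFinOrder_of_forall_pow_prime {G : Type*} [Group G]
    {H : Subgroup G} (hH : ∀ x ∈ H, ∀ q : ℕ, q.Prime → x ^ q = 1 → x = 1) {g : G}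
    (hg : g ∈ H) (hfin : IsOfFinOrder g) : g = 1 := by
  by_contra hne
  obtain ⟨q, hq, hqg⟩ := Nat.exists_prime_and_dvd (mt orderOf_eq_one_iff.1 hne)
  have horder : orderOf (g ^ (orderOf g / q)) = q :=
    orderOf_pow_orderOf_div hfin.orderOf_pos.ne' hqg
  have hone : g ^ (orderOf g / q) = 1 := by
    refine hH _ (pow_mem hg _) q hq ?_
    simpa only [horder] using pow_orderOf_eq_one (g ^ (orderOf g / q))
  rw [hone, orderOf_one] at horder
  exact hq.one_lt.ne horder

namespace PadicInt

variable {p : ℕ} [Fact p.Prime]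

theorem pow_pred_lt_norm_natCast {k : ℕ} (hk : (p ≠ 2 ∧ 1 ≤ k) ∨ (p = 2 ∧ 2 ≤ k)) {r : ℝ}
    (hr0 : 0 ≤ r) (hr : r ≤ (p : ℝ) ^ (-(k : ℤ))) {q : ℕ} (hq : q.Prime) :
    r ^ (q - 1) < ‖(q : ℤ_[p])‖ := by
  have hp : p.Prime := Fact.out
  have hp1 : (1 : ℝ) < p := by exact_mod_cast hp.one_lt
  have hbound : r ^ (q - 1) ≤ ((p : ℝ) ^ (k * (q - 1)))⁻¹ :=
    calc r ^ (q - 1) ≤ ((p : ℝ) ^ (-(k : ℤ))) ^ (q - 1) := pow_le_pow_left₀ hr0 hr _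
      _ = ((p : ℝ) ^ (k * (q - 1)))⁻¹ := by rw [zpow_neg, zpow_natCast, inv_pow, pow_mul]
  refine hbound.trans_lt ?_
  rcases eq_or_ne q p with rfl | hqp
  · have hexp : 1 < k * (q - 1) := by
      rcases hk with ⟨hp2, hk1⟩ | ⟨rfl, hk2⟩
      · have := hp.two_le
        exact lt_of_lt_of_le (by omega) (Nat.le_mul_of_pos_left _ hk1)
      · omega
    rw [norm_p]
    exact inv_strictAnti₀ (by positivity) (by simpa using pow_lt_pow_right₀ hp1 hexp)
  · rw [norm_natCast_eq_one_iff.2 ((Nat.coprime_primes hp hq).2 hqp.symm)]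
    have hexp : k * (q - 1) ≠ 0 := by
      have := hq.two_le
      rcases hk with ⟨-, hk⟩ | ⟨-, hk⟩ <;> exact Nat.mul_ne_zero (by omega) (by omega)
    exact inv_lt_one_of_one_lt₀ (one_lt_pow₀ hp1 hexp)

end PadicInt

namespace Matrix

variable {p : ℕ} [Fact p.Prime]

theorem norm_le_pow_iff_map_toZModPow_eq_zero {m n : Type*} [Fintype m] [Fintype n]
    (A : Matrix m n ℤ_[p]) (k : ℕ) :
    ‖A‖ ≤ (p : ℝ) ^ (-(k : ℤ)) ↔ A.map (PadicInt.toZModPow k) = 0 := by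
  rw [norm_le_iff (by positivity), ← Matrix.ext_iff]
  simp only [PadicInt.norm_le_pow_iff_mem_span_pow, ← PadicInt.ker_toZModPow, RingHom.mem_ker,
    map_apply, zero_apply]

theorem eq_zero_of_one_add_pow_eq_one {ι : Type*} [Fintype ι] [DecidableEq ι]
    {q : ℕ} (hq : q.Prime) {A : Matrix ι ι ℤ_[p]} (hA : ‖A‖ ^ (q - 1) < ‖(q : ℤ_[p])‖)
    (h : (1 + A) ^ q = 1) : A = 0 := by
  by_contra hA0
  set r := ‖A‖
  have hr0 : 0 < r := norm_pos_iff.2 hA0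
  have hq0 : 0 < ‖(q : ℤ_[p])‖ := norm_pos_iff.2 (Nat.cast_ne_zero.2 hq.ne_zero)
  have hr1 : r < 1 :=
    (pow_lt_one_iff_of_nonneg hr0.le (by have := hq.two_le; omega)).1
      (hA.trans_le (PadicInt.norm_le_one _))
  have norm_nsmul (c : ℕ) (B : Matrix ι ι ℤ_[p]) : ‖c • B‖ = ‖(c : ℤ_[p])‖ * ‖B‖ := by
    rw [← Nat.cast_smul_eq_nsmul ℤ_[p], norm_smul]
  have hterm : ∀ m ∈ Ico 2 (q + 1), ‖q.choose m • A ^ m‖ < ‖(q : ℤ_[p])‖ * r := by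
    intro m hm
    rw [mem_Ico] at hm
    rw [norm_nsmul]
    have hpow : ‖A ^ m‖ ≤ r ^ m := norm_pow_le_of_isUltrametricDist A (by omega)
    rcases (Nat.lt_succ_iff.1 hm.2).lt_or_eq with hmq | rfl
    · obtain ⟨c, hc⟩ := hq.dvd_choose_self (by omega) hmq
      calc ‖(q.choose m : ℤ_[p])‖ * ‖A ^ m‖ ≤ ‖(q : ℤ_[p])‖ * r ^ m := by
            rw [hc, Nat.cast_mul, norm_mul]
            gcongr
            exact mul_le_of_le_one_right (norm_nonneg _) (PadicInt.norm_le_one _)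
        _ < ‖(q : ℤ_[p])‖ * r := by
            gcongr
            exact pow_lt_self_of_lt_one₀ hr0 hr1 (by omega)
    · calc ‖(m.choose m : ℤ_[p])‖ * ‖A ^ m‖ ≤ r ^ (m - 1) * r := by
            rw [Nat.choose_self, Nat.cast_one, norm_one, one_mul, ← pow_succ,
              Nat.sub_add_cancel hq.one_le]
            exact hpow
        _ < ‖(m : ℤ_[p])‖ * r := by gcongr
  have hsum : q • A = -∑ m ∈ Ico 2 (q + 1), q.choose m • A ^ m := by
    rw [one_add_pow_eq_one_add_nsmul_add_sum, add_assoc, add_eq_left] at h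
    exact eq_neg_of_add_eq_zero_left h
  obtain ⟨m, hm, hle⟩ := IsUltrametricDist.exists_norm_finsetSum_le_of_nonempty
    (nonempty_Ico.2 (by have := hq.two_le; omega : 2 < q + 1)) fun m => q.choose m • A ^ m
  rw [← norm_neg, ← hsum, norm_nsmul] at hle
  exact (hle.trans_lt (hterm m hm)).false

end Matrix

/-- The kernel of the reduction map `GL_n(ℤ_p) → GL_n(ℤ/p^k)` is torsion-free,
for `k ≥ 1` when `p` is odd, and `k ≥ 2` when `p = 2`. -/
theorem ker_reduction_torsionFree
    (p : ℕ) [Fact p.Prime] (n k : ℕ)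
    (hk : (p ≠ 2 ∧ 1 ≤ k) ∨ (p = 2 ∧ 2 ≤ k))
    (g : Matrix.GeneralLinearGroup (Fin n) ℤ_[p])
    (hg : g ∈ MonoidHom.ker
      (Units.map (RingHom.mapMatrix (PadicInt.toZModPow k) :
        Matrix (Fin n) (Fin n) ℤ_[p] →+* Matrix (Fin n) (Fin n) (ZMod (p ^ k))).toMonoidHom))
    (hfin : IsOfFinOrder g) :
    g = 1 := by
  refine Subgroup.eq_one_of_isOfFinOrder_of_forall_pow_prime (fun x hx q hq hxq => ?_) hg hfin
  have hred : (x : Matrix (Fin n) (Fin n) ℤ_[p]).map (PadicInt.toZModPow k) = 1 := by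
    simpa [RingHom.mapMatrix_apply] using congrArg Units.val (MonoidHom.mem_ker.1 hx)
  have hnorm : ‖(x : Matrix (Fin n) (Fin n) ℤ_[p]) - 1‖ ≤ (p : ℝ) ^ (-(k : ℤ)) := by
    rw [Matrix.norm_le_pow_iff_map_toZModPow_eq_zero, Matrix.map_sub _ (map_sub _), hred,
      Matrix.map_one _ (map_zero _) (map_one _), sub_self]
  have hpow : (1 + ((x : Matrix (Fin n) (Fin n) ℤ_[p]) - 1)) ^ q = 1 := by
    rw [add_sub_cancel, ← Units.val_pow_eq_pow_val, hxq, Units.val_one]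
  exact Units.ext <| sub_eq_zero.1 <| Matrix.eq_zero_of_one_add_pow_eq_one hq
    (PadicInt.pow_pred_lt_norm_natCast hk (norm_nonneg _) hnorm hq) hpow
end
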